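/- arXiv:1805.01684 — 5 statements merged into one kernel-verified Lean document; each statement's English description precedes it below -/
import Mathlib

section
/- Let G be a graph with vertex cover X of size t, and let H be a 1-shallow minor of G (i.e., H is obtained from G by contracting disjoint stars and taking a subgraph). Then |E(H)|/|V(H)| ≤ t. In particular, ∇₁(G) ≤ vc(G). -/
open SimpleGraph

/-- If `X` is a vertex cover of `G` of size `t` and `H` is a 1-shallow minor
of `G` (realized by contracting disjoint stars `B w` and taking a subgraph), then
`|E(H)|/|V(H)| ≤ t`. -/
theorem closed_nbhd_stmt0 {V W : Type*} [Fintype V] [Fintype W] [DecidableEq V] [DecidableEq W]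
    (G : SimpleGraph V) (H : SimpleGraph W) [DecidableRel H.Adj]
    (X : Finset V) (hX : ∀ u v : V, G.Adj u v → u ∈ X ∨ v ∈ X)
    (t : ℕ) (ht : X.card = t)
    (B : W → Finset V)
    (hne : ∀ w, (B w).Nonempty)
    (hdisj : ∀ w w', w ≠ w' → Disjoint (B w) (B w'))
    (hstar : ∀ w, ∃ c ∈ B w, ∀ v ∈ B w, v = c ∨ G.Adj c v)
    (hedge : ∀ w w', H.Adj w w' → ∃ u ∈ B w, ∃ v ∈ B w', G.Adj u v) :
    (H.edgeFinset.card : ℝ) / (Fintype.card W) ≤ (t : ℝ) := by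
  classical
  have key : H.edgeFinset.card ≤ t * Fintype.card W := by
    rcases H.edgeFinset.eq_empty_or_nonempty with h | h
    · simp [h]
    · obtain ⟨e0, he0⟩ := h
      have hWne : Nonempty W := by
        induction e0 using Sym2.ind with
        | _ a b => exact ⟨a⟩
      have hVne : Nonempty V := ⟨(hne (Classical.arbitrary W)).choose⟩
      set P : Sym2 W → (V × W) → Prop :=
        fun e p => p.1 ∈ X ∧ ∃ w, p.1 ∈ B w ∧ e = s(w, p.2) with hP
      have hex : ∀ e ∈ H.edgeFinset, ∃ p, P e p := by
        intro e he
        induction e using Sym2.ind with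
        | _ a b =>
          rw [mem_edgeFinset, mem_edgeSet] at he
          obtain ⟨u, hu, v, hv, huv⟩ := hedge a b he
          rcases hX u v huv with hx | hx
          · exact ⟨(u, b), hx, a, hu, rfl⟩
          · exact ⟨(v, a), hx, b, hv, Sym2.eq_swap⟩
      let f : Sym2 W → V × W := fun e =>
        if h : ∃ p, P e p then h.choose else Classical.arbitrary _
      have hfP : ∀ e ∈ H.edgeFinset, P e (f e) := by
        intro e he
        have h := hex e he
        simp only [f, dif_pos h]
        exact h.choose_spec
      have hmaps : ∀ e ∈ H.edgeFinset, f e ∈ X ×ˢ (Finset.univ : Finset W) := by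
        intro e he
        have := (hfP e he).1
        simp [Finset.mem_product, this]
      have hinj : Set.InjOn f H.edgeFinset := by
        intro e1 he1 e2 he2 hfe
        obtain ⟨hx1, w1, hw1, he1'⟩ := hfP e1 he1
        obtain ⟨hx2, w2, hw2, he2'⟩ := hfP e2 he2
        rw [hfe] at he1' hw1
        have hw : w1 = w2 := by
          by_contra hne'
          exact Finset.disjoint_left.mp (hdisj w1 w2 hne') hw1 hw2
        exact he1'.trans (by rw [hw]; exact he2'.symm)
      have := Finset.card_le_card_of_injOn f hmaps hinj
      calc H.edgeFinset.card ≤ (X ×ˢ (Finset.univ : Finset W)).card := this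
        _ = t * Fintype.card W := by
            rw [Finset.card_product, ht, Finset.card_univ]
  have hr : (H.edgeFinset.card : ℝ) ≤ (t : ℝ) * (Fintype.card W : ℝ) := by
    exact_mod_cast key
  rcases Nat.eq_zero_or_pos (Fintype.card W) with h0 | hpos
  · rw [h0]
    simp
  · rw [div_le_iff₀ (by exact_mod_cast hpos)]
    exact hr
end

section
/- Let X be a vertex cover of a graph G, and orient G so that every edge incident to V(G)\X points toward V(G)\X and the edges inside X are oriented acyclically. Then in every directed graph obtained from this orientation by repeatedly adding transitive arcs (if u→v and v→w add u→w) and fraternal arcs (if u→v and w→v add u→w or w→u), no arc ever points from V(G)\X into X, and every vertex has in-degree at most |X|. -/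
open SimpleGraph

/-- One augmentation step: the new digraph `D'` contains `D`, is loopless, and every new
arc `a → b` is justified either by the transitive rule (`∃ v, a → v → b`) or by the
fraternal rule (`∃ v` with `a → v` and `b → v`). -/
def AugStep {V : Type*} (D D' : V → V → Prop) : Prop :=
  (∀ u v, D u v → D' u v) ∧ (∀ u, ¬ D' u u) ∧
  (∀ a b, D' a b → ¬ D a b → ∃ v, (D a v ∧ D v b) ∨ (D a v ∧ D b v))

/-- Let `X` be a vertex cover of `G`.  Orient `G` so that every edge incident
to `V ∖ X` points toward `V ∖ X` and edges inside `X` are oriented acyclically.  Then in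
every digraph obtained from this orientation by repeatedly adding transitive and fraternal
arcs, no arc points from `V ∖ X` into `X`, and every in-degree is at most `|X|`. -/
theorem closed_nbhd_stmt3 {V : Type*} [Fintype V] (G : SimpleGraph V) (X : Finset V)
    (hX : ∀ u v : V, G.Adj u v → u ∈ X ∨ v ∈ X)
    (D0 : V → V → Prop)
    (horient : ∀ u v, G.Adj u v ↔ (D0 u v ∨ D0 v u))
    (hirr : ∀ u, ¬ D0 u u)
    (hanti : ∀ u v, ¬ (D0 u v ∧ D0 v u))
    (htoY : ∀ u v, G.Adj u v → v ∉ X → D0 u v)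
    (r : V → ℕ) (hacyc : ∀ u v, D0 u v → u ∈ X → v ∈ X → r u < r v)
    (D : V → V → Prop) (hD : Relation.ReflTransGen AugStep D0 D) :
    (∀ u v, D u v → u ∉ X → v ∈ X → False) ∧
    (∀ v : V, {u : V | D u v}.ncard ≤ X.card) := by
  have key : ∀ u v, D u v → u ∈ X := by
    induction hD with
    | refl =>
      intro u v h
      by_contra hu
      have hadj : G.Adj u v := (horient u v).mpr (Or.inl h)
      exact hanti u v ⟨h, htoY v u hadj.symm hu⟩
    | @tail b c _ hstep ih =>
      intro u v h
      by_cases hb : b u v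
      · exact ih u v hb
      · obtain ⟨w, hw⟩ := hstep.2.2 u v h hb
        rcases hw with ⟨h1, _⟩ | ⟨h1, _⟩ <;> exact ih u w h1
  refine ⟨fun u v h hu _ => hu (key u v h), fun v => ?_⟩
  have hsub : {u : V | D u v} ⊆ ↑X := fun u hu => key u v hu
  calc {u : V | D u v}.ncard ≤ (↑X : Set V).ncard :=
        Set.ncard_le_ncard hsub X.finite_toSet
    _ = X.card := Set.ncard_coe_finset X
end

section
/- In the SAT reduction graph G (built from a CNF formula φ with variable halves X_l, X_h), for every partial assignment vertex α ∈ A, the closed 2-neighbourhood N²[α] contains all of A ∪ C ∪ {v_a, v_b}, and a vertex β ∈ B lies in N²[α] if and only if the combined assignment (α,β) falsifies some clause of φ. Consequently, φ is satisfiable if and only if some vertex α ∈ A has |N²[α]| < |A| + |B| + |C| + 2. -/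
open SimpleGraph

/-- Vertices of the SAT reduction graph: partial assignments `A` to the low half,
partial assignments `B` to the high half, clause vertices `Cl`, and two extra
vertices `va`, `vb`. -/
inductive RVert (σ τ ι : Type*) where
  | A : σ → RVert σ τ ι
  | B : τ → RVert σ τ ι
  | Cl : ι → RVert σ τ ι
  | va : RVert σ τ ι
  | vb : RVert σ τ ι

/-- Base relation of the reduction graph: a partial assignment is connected to exactly the
clauses it does not satisfy; `va` is adjacent to `vb`, all of `A` and all clauses; `vb` is
adjacent to all of `B` and all clauses. -/
def redRel {σ τ ι : Type*} (satL : σ → ι → Prop) (satH : τ → ι → Prop) :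
    RVert σ τ ι → RVert σ τ ι → Prop
  | .A a, .Cl c => ¬ satL a c
  | .B b, .Cl c => ¬ satH b c
  | .va, .vb => True
  | .va, .A _ => True
  | .va, .Cl _ => True
  | .vb, .B _ => True
  | .vb, .Cl _ => True
  | _, _ => False

/-- The SAT reduction graph. -/
def redGraph {σ τ ι : Type*} (satL : σ → ι → Prop) (satH : τ → ι → Prop) :
    SimpleGraph (RVert σ τ ι) :=
  SimpleGraph.fromRel (redRel satL satH)

namespace RVertAux

open RVert

def rvertEquiv (σ τ ι : Type*) : RVert σ τ ι ≃ (σ ⊕ τ ⊕ ι ⊕ Bool) where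
  toFun v := match v with
    | .A a => .inl a
    | .B b => .inr (.inl b)
    | .Cl c => .inr (.inr (.inl c))
    | .va => .inr (.inr (.inr true))
    | .vb => .inr (.inr (.inr false))
  invFun x := match x with
    | .inl a => .A a
    | .inr (.inl b) => .B b
    | .inr (.inr (.inl c)) => .Cl c
    | .inr (.inr (.inr true)) => .va
    | .inr (.inr (.inr false)) => .vb
  left_inv := by rintro (a | b | c | _ | _) <;> rfl
  right_inv := by rintro (a | b | c | (_ | _)) <;> rfl

variable {σ τ ι : Type*} (satL : σ → ι → Prop) (satH : τ → ι → Prop)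

lemma adj_A_iff (a : σ) (v : RVert σ τ ι) :
    (redGraph satL satH).Adj (A a) v ↔ v = va ∨ ∃ c, v = Cl c ∧ ¬ satL a c := by
  cases v <;> simp [redGraph, SimpleGraph.fromRel_adj, redRel]

lemma adj_B_iff (b : τ) (v : RVert σ τ ι) :
    (redGraph satL satH).Adj v (B b) ↔ v = vb ∨ ∃ c, v = Cl c ∧ ¬ satH b c := by
  cases v <;> simp [redGraph, SimpleGraph.fromRel_adj, redRel]

lemma adj_va_A (a : σ) : (redGraph satL satH (ι := ι)).Adj va (A a) := by
  simp [redGraph, SimpleGraph.fromRel_adj, redRel]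

lemma adj_va_Cl (c : ι) : (redGraph satL satH (σ := σ) (τ := τ)).Adj va (Cl c) := by
  simp [redGraph, SimpleGraph.fromRel_adj, redRel]

lemma adj_va_vb : (redGraph satL satH (σ := σ) (τ := τ) (ι := ι)).Adj va vb := by
  simp [redGraph, SimpleGraph.fromRel_adj, redRel]

lemma adj_vb_B (b : τ) : (redGraph satL satH (σ := σ) (ι := ι)).Adj vb (B b) := by
  simp [redGraph, SimpleGraph.fromRel_adj, redRel]

lemma dist_le_two (a : σ) (v : RVert σ τ ι)
    (hv : (∃ a', v = RVert.A a') ∨ (∃ c, v = RVert.Cl c) ∨ v = RVert.va ∨ v = RVert.vb) :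
    (redGraph satL satH).dist (RVert.A a) v ≤ 2 := by
  set G := redGraph satL satH with hG
  have h1 : G.Adj (A a) va := (adj_va_A satL satH a).symm
  rcases hv with ⟨a', rfl⟩ | ⟨c, rfl⟩ | rfl | rfl
  · rcases eq_or_ne a a' with rfl | hne
    · simp [SimpleGraph.dist_self]
    · exact SimpleGraph.dist_le (Walk.cons h1 (Walk.cons (adj_va_A satL satH a') Walk.nil))
  · exact SimpleGraph.dist_le (Walk.cons h1 (Walk.cons (adj_va_Cl satL satH c) Walk.nil))
  · calc G.dist (A a) va ≤ (Walk.cons h1 Walk.nil).length := SimpleGraph.dist_le _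
      _ ≤ 2 := by norm_num
  · exact SimpleGraph.dist_le (Walk.cons h1 (Walk.cons (adj_va_vb satL satH) Walk.nil))

lemma dist_A_B_iff (a : σ) (b : τ) :
    (redGraph satL satH).dist (RVert.A a) (RVert.B b) ≤ 2 ↔
      ∃ c, ¬ satL a c ∧ ¬ satH b c := by
  set G := redGraph satL satH with hG
  constructor
  · intro h
    have hr : G.Reachable (A a) (B b) := by
      exact ⟨Walk.cons ((adj_va_A satL satH a).symm)
        (Walk.cons (adj_va_vb satL satH) (Walk.cons (adj_vb_B satL satH b) Walk.nil))⟩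
    have hne : (A a : RVert σ τ ι) ≠ B b := by simp
    have hpos : 0 < G.dist (A a) (B b) := hr.pos_dist_of_ne hne
    have hnadj : ¬ G.Adj (A a) (B b) := by
      rw [adj_B_iff]; rintro (h | ⟨c, h, _⟩) <;> simp at h
    have h2 : G.dist (A a) (B b) = 2 := by
      have h1 : G.dist (A a) (B b) ≠ 1 := fun hh =>
        hnadj (SimpleGraph.dist_eq_one_iff_adj.mp hh)
      omega
    obtain ⟨p, hp⟩ := hr.exists_walk_length_eq_dist
    rw [h2] at hp
    cases p with
    | cons hadj q =>
      cases q with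
      | nil => simp at hp
      | @cons _ w _ hadj' q' =>
        have hq' : q'.length = 0 := by simpa using hp
        have hw : w = B b := q'.eq_of_length_eq_zero hq'
        subst hw
        rcases (adj_A_iff satL satH a _).mp hadj with rfl | ⟨c, rfl, hc⟩
        · rcases (adj_B_iff satL satH b _).mp hadj' with h | ⟨c, h, _⟩ <;> simp at h
        · rcases (adj_B_iff satL satH b _).mp hadj' with h | ⟨c', hc', hc2⟩
          · simp at h
          · obtain rfl : c = c' := by injection hc'
            exact ⟨c, hc, hc2⟩
  · rintro ⟨c, hc1, hc2⟩
    have h1 : G.Adj (A a) (Cl c) := by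
      rw [adj_A_iff]; exact Or.inr ⟨c, rfl, hc1⟩
    have h2 : G.Adj (Cl c) (B b) := by
      rw [adj_B_iff]; exact Or.inr ⟨c, rfl, hc2⟩
    exact SimpleGraph.dist_le (Walk.cons h1 (Walk.cons h2 Walk.nil))

end RVertAux

/-- in the reduction graph, for every `α ∈ A` the closed 2-neighbourhood
`N²[α]` contains all of `A ∪ C ∪ {va, vb}`; a vertex `β ∈ B` lies in `N²[α]` iff the
combined assignment `(α, β)` falsifies some clause; consequently `φ` is satisfiable iff
some `α ∈ A` has `|N²[α]| < |A| + |B| + |C| + 2`. -/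
theorem closed_nbhd_stmt4 {σ τ ι : Type*} [Fintype σ] [Fintype τ] [Fintype ι]
    (satL : σ → ι → Prop) (satH : τ → ι → Prop) :
    (∀ (a : σ) (v : RVert σ τ ι),
      ((∃ a', v = RVert.A a') ∨ (∃ c, v = RVert.Cl c) ∨ v = RVert.va ∨ v = RVert.vb) →
        (redGraph satL satH).dist (RVert.A a) v ≤ 2) ∧
    (∀ (a : σ) (b : τ),
      (redGraph satL satH).dist (RVert.A a) (RVert.B b) ≤ 2 ↔
        ∃ c, ¬ satL a c ∧ ¬ satH b c) ∧
    ((∃ (a : σ) (b : τ), ∀ c, satL a c ∨ satH b c) ↔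
      ∃ a : σ, {v : RVert σ τ ι | (redGraph satL satH).dist (RVert.A a) v ≤ 2}.ncard
        < Fintype.card σ + Fintype.card τ + Fintype.card ι + 2) := by
  have hfin : Finite (RVert σ τ ι) :=
    Finite.of_equiv _ (RVertAux.rvertEquiv σ τ ι).symm
  have hcard : Nat.card (RVert σ τ ι) =
      Fintype.card σ + Fintype.card τ + Fintype.card ι + 2 := by
    rw [Nat.card_congr (RVertAux.rvertEquiv σ τ ι)]
    simp [Nat.card_sum, Nat.card_eq_fintype_card, add_assoc]
  refine ⟨RVertAux.dist_le_two satL satH, RVertAux.dist_A_B_iff satL satH, ?_⟩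
  constructor
  · rintro ⟨a, b, hab⟩
    refine ⟨a, ?_⟩
    have hb : RVert.B b ∉ {v : RVert σ τ ι | (redGraph satL satH).dist (RVert.A a) v ≤ 2} := by
      rw [Set.mem_setOf_eq, RVertAux.dist_A_B_iff]
      rintro ⟨c, hc1, hc2⟩
      rcases hab c with h | h
      · exact hc1 h
      · exact hc2 h
    have hss : {v : RVert σ τ ι | (redGraph satL satH).dist (RVert.A a) v ≤ 2} ⊂ Set.univ :=
      (Set.ssubset_univ_iff).mpr (fun h => hb (h ▸ Set.mem_univ _))
    calc _ < (Set.univ : Set (RVert σ τ ι)).ncard :=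
        Set.ncard_lt_ncard hss Set.finite_univ
      _ = _ := by rw [Set.ncard_univ, hcard]
  · rintro ⟨a, ha⟩
    by_contra hno
    push_neg at hno
    have heq : {v : RVert σ τ ι | (redGraph satL satH).dist (RVert.A a) v ≤ 2} = Set.univ := by
      ext v
      simp only [Set.mem_setOf_eq, Set.mem_univ, iff_true]
      cases v with
      | A a' => exact RVertAux.dist_le_two satL satH a _ (Or.inl ⟨a', rfl⟩)
      | B b =>
        rw [RVertAux.dist_A_B_iff]
        rcases hno a b with ⟨c, hc⟩
        exact ⟨c, hc.1, hc.2⟩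
      | Cl c => exact RVertAux.dist_le_two satL satH a _ (Or.inr (Or.inl ⟨c, rfl⟩))
      | va => exact RVertAux.dist_le_two satL satH a _ (Or.inr (Or.inr (Or.inl rfl)))
      | vb => exact RVertAux.dist_le_two satL satH a _ (Or.inr (Or.inr (Or.inr rfl)))
    rw [heq, Set.ncard_univ, hcard] at ha
    exact lt_irrefl _ ha
end

section
/- In the SAT reduction graph G, if α ∈ A and β ∈ B satisfy N[α] ∩ N[β] = ∅ (closed neighbourhoods), then the combined assignment (α,β) satisfies every clause of φ. -/
open SimpleGraph

/-- if `α ∈ A` and `β ∈ B` have disjoint closed neighbourhoods in the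
reduction graph, then the combined assignment `(α, β)` satisfies every clause. -/
theorem closed_nbhd_stmt5 {σ τ ι : Type*} (satL : σ → ι → Prop) (satH : τ → ι → Prop)
    (a : σ) (b : τ)
    (h : (insert (RVert.A a) ((redGraph satL satH).neighborSet (RVert.A a))) ∩
         (insert (RVert.B b) ((redGraph satL satH).neighborSet (RVert.B b))) = ∅) :
    ∀ c : ι, satL a c ∨ satH b c := by
  intro c
  by_contra hc
  push_neg at hc
  have hmem : RVert.Cl c ∈
      (insert (RVert.A a) ((redGraph satL satH).neighborSet (RVert.A a))) ∩
      (insert (RVert.B b) ((redGraph satL satH).neighborSet (RVert.B b))) := by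
    constructor
    · exact Set.mem_insert_iff.2 (Or.inr ⟨by simp, Or.inl hc.1⟩)
    · exact Set.mem_insert_iff.2 (Or.inr ⟨by simp, Or.inl hc.2⟩)
  rw [h] at hmem
  exact hmem
end

section
/- Let (T, β) be a tree decomposition of G, let u be a vertex, and let i be the topmost node whose bag contains u, with parent j (so u ∉ β(j) and β(j) ⊇ β(i) ∖ {u} in the nice forget setting). Then the set of vertices at distance exactly 2 from u partitions as (N²(u) ∩ P_j) ⊎ (N²(u) ∩ β(j)) ⊎ (N²(u) ∩ F_j), and moreover N²(u) ∩ F_j = N(N(u) ∩ β(i)) ∩ F_j, i.e., every 2-neighbour of u in the future F_j is reached via a neighbour of u inside the bag β(i). -/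
open SimpleGraph

open SimpleGraph

/-- `(T, β)` is a tree decomposition of `G`: bags cover vertices, every edge lies in some
bag, and the bags containing a fixed vertex induce a connected subgraph of `T`. -/
structure IsTreeDecomp {V ι : Type*} (G : SimpleGraph V) (T : SimpleGraph ι)
    (β : ι → Set V) : Prop where
  tree : T.IsTree
  covers : ∀ v : V, ∃ x : ι, v ∈ β x
  edges : ∀ u v : V, G.Adj u v → ∃ x : ι, u ∈ β x ∧ v ∈ β x
  conn : ∀ v : V, (T.induce {x : ι | v ∈ β x}).Connected

/-- The subtree `T_i` of the tree `T` rooted at `r`: nodes `x` such that every walk from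
the root `r` to `x` passes through `i` (i.e. `i` together with all its descendants). -/
def Desc {ι : Type*} (T : SimpleGraph ι) (r i : ι) : Set ι :=
  {x : ι | ∀ p : T.Walk r x, i ∈ p.support}

/-- The past `P_i` of a node `i`. -/
def Past {V ι : Type*} (T : SimpleGraph ι) (β : ι → Set V) (r i : ι) : Set V :=
  (⋃ j ∈ Desc T r i, β j) \ β i

/-- The future `F_i` of a node `i`. -/
def Fut {V ι : Type*} (T : SimpleGraph ι) (β : ι → Set V) (r i : ι) : Set V :=
  Set.univ \ (Past T β r i ∪ β i)
lemma desc_mono' {ι : Type*} (T : SimpleGraph ι) (r i j : ι)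
    (h : i ∈ Desc T r j) : Desc T r i ⊆ Desc T r j := by
  classical
  intro x hx p
  have hi : i ∈ p.support := hx p
  have hj : j ∈ (p.takeUntil i hi).support := h _
  exact p.support_takeUntil_subset hi hj

lemma bag_sep' {V ι : Type*} {G : SimpleGraph V} {T : SimpleGraph ι} {β : ι → Set V}
    (td : IsTreeDecomp G T β) {r i x y : ι} {w : V}
    (hx : x ∈ Desc T r i) (hy : y ∉ Desc T r i)
    (hwx : w ∈ β x) (hwy : w ∈ β y) : w ∈ β i := by
  simp only [Desc, Set.mem_setOf_eq, not_forall] at hy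
  obtain ⟨p, hp⟩ := hy
  obtain ⟨q⟩ := (td.conn w).preconnected ⟨y, hwy⟩ ⟨x, hwx⟩
  let q' : T.Walk y x := q.map (SimpleGraph.Embedding.induce _).toHom
  have : i ∈ (p.append q').support := hx _
  rw [SimpleGraph.Walk.mem_support_append_iff] at this
  rcases this with h | h
  · exact absurd h hp
  · have h : i ∈ (q.map (SimpleGraph.Embedding.induce _).toHom).support := h
    rw [SimpleGraph.Walk.support_map, List.mem_map] at h
    obtain ⟨⟨k, hk⟩, _, hk2⟩ := h
    simpa [← hk2] using hk

/-- let `i` be the topmost node whose bag contains `u`, with parent `j`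
(so `u ∉ β j`).  Then the set `N²(u)` of vertices at distance exactly `2` from `u`
partitions into its intersections with `P_j`, `β j` and `F_j`, and moreover
`N²(u) ∩ F_j = N(N(u) ∩ β i) ∩ F_j`: every 2-neighbour of `u` in the future is reached
via a neighbour of `u` inside the bag `β i`. -/
theorem closed_nbhd_stmt13 {V ι : Type*} (G : SimpleGraph V)
    (T : SimpleGraph ι) (β : ι → Set V) (td : IsTreeDecomp G T β)
    (r i j : ι) (u : V)
    (hui : u ∈ β i) (huj : u ∉ β j)
    (hparent : T.Adj j i) (hdesc : i ∈ Desc T r j)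
    (htop : {x : ι | u ∈ β x} ⊆ Desc T r i) :
    ({v : V | G.dist u v = 2}
        = ({v : V | G.dist u v = 2} ∩ Past T β r j)
          ∪ ({v : V | G.dist u v = 2} ∩ β j)
          ∪ ({v : V | G.dist u v = 2} ∩ Fut T β r j)) ∧
    (Past T β r j ∩ β j = ∅) ∧ (Past T β r j ∩ Fut T β r j = ∅) ∧
    ((β j : Set V) ∩ Fut T β r j = ∅) ∧
    ({v : V | G.dist u v = 2} ∩ Fut T β r j
        = {v : V | ∃ w ∈ G.neighborSet u ∩ β i, G.Adj w v} ∩ Fut T β r j) := by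
  have hij : Desc T r i ⊆ Desc T r j := desc_mono' T r i j hdesc
  -- vertices in the future are in no bag of a descendant of j
  have hfut : ∀ v ∈ Fut T β r j, ∀ y ∈ Desc T r j, v ∉ β y := by
    intro v hv y hy hvy
    simp only [Fut, Set.mem_diff, Set.mem_union, not_or, Past, Set.mem_iUnion] at hv
    by_cases hvj : v ∈ β j
    · exact hv.2.2 hvj
    · exact hv.2.1 ⟨⟨y, hy, hvy⟩, hvj⟩
  refine ⟨?_, ?_, ?_, ?_, ?_⟩
  · ext v
    by_cases h1 : v ∈ Past T β r j <;> by_cases h2 : v ∈ β j <;>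
      simp only [Fut, Set.mem_union, Set.mem_inter_iff, Set.mem_diff, Set.mem_univ,
        not_or, true_and] <;> tauto
  · ext v; simp only [Past, Set.mem_inter_iff, Set.mem_diff, Set.mem_empty_iff_false,
      iff_false, not_and]; tauto
  · ext v; simp only [Fut, Set.mem_inter_iff, Set.mem_diff, Set.mem_union,
      Set.mem_empty_iff_false, iff_false, not_and]; tauto
  · ext v; simp only [Fut, Set.mem_inter_iff, Set.mem_diff, Set.mem_union,
      Set.mem_empty_iff_false, iff_false, not_and]; tauto
  · ext v
    simp only [Set.mem_inter_iff, Set.mem_setOf_eq, SimpleGraph.mem_neighborSet]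
    constructor
    · rintro ⟨hd, hf⟩
      refine ⟨?_, hf⟩
      obtain ⟨p, hp⟩ := SimpleGraph.exists_walk_of_dist_ne_zero (by omega : G.dist u v ≠ 0)
      rw [hd] at hp
      set w := p.getVert 1 with hw
      have huw : G.Adj u w := by
        have := p.adj_getVert_succ (by omega : 0 < p.length)
        simpa using this
      have hwv : G.Adj w v := by
        have := p.adj_getVert_succ (by omega : 1 < p.length)
        have h2 : p.getVert 2 = v := by
          have := p.getVert_length; rw [hp] at this; simpa using this
        rwa [h2] at this
      obtain ⟨x, hux, hwx⟩ := td.edges u w huw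
      obtain ⟨y, hwy, hvy⟩ := td.edges w v hwv
      have hx : x ∈ Desc T r i := htop hux
      have hy : y ∉ Desc T r i := fun h => hfut v hf y (hij h) hvy
      exact ⟨w, ⟨huw, bag_sep' td hx hy hwx hwy⟩, hwv⟩
    · rintro ⟨⟨w, ⟨huw, hwi⟩, hwv⟩, hf⟩
      refine ⟨?_, hf⟩
      have hne : u ≠ v := by
        rintro rfl
        exact hfut u hf i hdesc hui
      have hnadj : ¬ G.Adj u v := by
        intro hadj
        obtain ⟨x, hux, hvx⟩ := td.edges u v hadj
        exact hfut v hf x (hij (htop hux)) hvx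
      have hle : G.dist u v ≤ 2 := by
        have := G.dist_le (huw.toWalk.append hwv.toWalk)
        simpa using this
      have h0 : G.dist u v ≠ 0 := by
        rw [SimpleGraph.dist_ne_zero_iff_ne_and_reachable]
        exact ⟨hne, ⟨huw.toWalk.append hwv.toWalk⟩⟩
      have h1 : G.dist u v ≠ 1 := by
        rw [Ne, SimpleGraph.dist_eq_one_iff_adj]
        exact hnadj
      omega
end
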